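/- Let Γ be a group generated by a finite set with associated alphabet A and evaluation homomorphism ρ : A* → Γ, and let F ⊴ Γ be a finite normal subgroup with ℓ := max_{f∈F} |f| (word length). Let π ∈ A* be a word that is geodesic (|π| = |ρ(π)|). Then π contains a (contiguous) subword π' with |π'| ≥ (|π| − ℓ)/(ℓ + 1) such that no nonempty contiguous subword v of π' satisfies ρ(v) ∈ F. -/

import Mathlib

/-!
Work in `Γ ⧸ F`, where a word evaluating into `F` is a loop. Repeatedly cutting a loop `v` out of
a piece `a ++ v ++ b` replaces it by the two pieces `a` and `b`: this does not change the value of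
the concatenation in `Γ ⧸ F`, adds one piece and removes `|v| ≥ 1` letters, so the number of pieces
plus the total length never exceeds `|π| + 1`. When every piece is loop-free, the concatenation
of the pieces followed by a word of length `≤ ℓ` for the missing element of `F` evaluates to
`ρ π`; geodesicity gives `|π| ≤ ∑ |pᵢ| + ℓ`, hence at most `ℓ + 1` pieces, and the longest one has
length at least `(|π| - ℓ) / (ℓ + 1)`.
-/

namespace List

variable {α : Type*}

theorem exists_sum_map_length_le_length_mul {P : List α → Prop} (hP : P [])
    (L : List (List α)) (hL : ∀ p ∈ L, P p) :
    ∃ p, P p ∧ (L.map length).sum ≤ L.length * p.length := by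
  classical
  rcases eq_or_ne L [] with rfl | hne
  · exact ⟨[], hP, by simp⟩
  obtain ⟨p, hpL, hmax⟩ := L.toFinset.exists_max_image length (by simpa using hne)
  refine ⟨p, hL p (mem_toFinset.mp hpL), ?_⟩
  simpa using sum_le_card_nsmul (L.map length) p.length
    (by simpa using fun q hq ↦ hmax q (mem_toFinset.mpr hq))

end List

section Loops

open List

variable {A M : Type*} [Monoid M] (σ : List A → M)

def IsLoopFree (w : List A) : Prop :=
  ∀ a b v : List A, w = a ++ v ++ b → v ≠ [] → σ v ≠ 1

variable {σ} (hσ : ∀ u v, σ (u ++ v) = σ u * σ v)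
include hσ

theorem flatten_eval_cut_loop (X Y : List (List A)) (a v b : List A) (hv : σ v = 1) :
    σ (X ++ (a ++ v ++ b) :: Y).flatten = σ (X ++ a :: b :: Y).flatten := by
  simp only [flatten_append, flatten_cons, ← List.append_assoc, hσ, hv, mul_one]

theorem exists_loopFree_refinement (L : List (List A)) :
    ∃ L' : List (List A), (∀ p ∈ L', ∃ q ∈ L, p <:+: q) ∧ (∀ p ∈ L', IsLoopFree σ p) ∧
      σ L'.flatten = σ L.flatten ∧
      L'.length + (L'.map length).sum ≤ L.length + (L.map length).sum := by
  induction hn : (L.map length).sum using Nat.strong_induction_on generalizing L with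
  | _ n ih =>
  by_cases hfree : ∀ p ∈ L, IsLoopFree σ p
  · exact ⟨L, fun p hp ↦ ⟨p, hp, infix_refl p⟩, hfree, rfl, by rw [hn]⟩
  push Not at hfree
  obtain ⟨p, hpL, hp⟩ := hfree
  simp only [IsLoopFree, not_forall, not_not] at hp
  obtain ⟨a, b, v, rfl, hv, hσv⟩ := hp
  obtain ⟨X, Y, rfl⟩ := append_of_mem hpL
  have hlen_v : 0 < v.length := length_pos_iff.mpr hv
  have hsum : ((X ++ a :: b :: Y).map length).sum + v.length = n := by
    subst hn; simp only [map_append, map_cons, sum_append, sum_cons, length_append]; omega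
  obtain ⟨L', hinf, hfree', heval, hweight⟩ := ih _ (by omega) (X ++ a :: b :: Y) rfl
  refine ⟨L', fun p hp ↦ ?_, hfree', ?_, ?_⟩
  · obtain ⟨q, hq, hpq⟩ := hinf p hp
    simp only [mem_append, mem_cons] at hq
    rcases hq with hq | rfl | rfl | hq
    · exact ⟨q, by simp [hq], hpq⟩
    · exact ⟨_, mem_append_right X mem_cons_self, hpq.trans ⟨[], v ++ b, by simp⟩⟩
    · exact ⟨_, mem_append_right X mem_cons_self, hpq.trans ⟨a ++ v, [], by simp⟩⟩
    · exact ⟨q, by simp [hq], hpq⟩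
  · rw [heval, flatten_eval_cut_loop hσ X Y a v b hσv]
  · simp only [length_append, length_cons] at hweight ⊢; omega

end Loops

theorem stmt18_general {Γ A : Type*} [Group Γ] (ρ : List A → Γ)
    (hρm : ∀ u v : List A, ρ (u ++ v) = ρ u * ρ v)
    (F : Subgroup Γ) [F.Normal]
    (ℓ : ℕ) (hℓ : ∀ f ∈ F, ∃ wrd : List A, ρ wrd = f ∧ wrd.length ≤ ℓ)
    (π : List A) (hgeo : ∀ wrd : List A, ρ wrd = ρ π → π.length ≤ wrd.length) :
    ∃ pre mid suf : List A, π = pre ++ mid ++ suf ∧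
      ((π.length : ℝ) - (ℓ : ℝ)) / ((ℓ : ℝ) + 1) ≤ (mid.length : ℝ) ∧
      ∀ (a b v : List A), mid = a ++ v ++ b → v ≠ [] → ρ v ∉ F := by
  set σ : List A → Γ ⧸ F := fun w ↦ (ρ w : Γ ⧸ F)
  obtain ⟨L, hinf, hfree, heval, hweight⟩ :=
    exists_loopFree_refinement (σ := σ)
      (fun u v ↦ by simp only [σ, hρm, QuotientGroup.mk_mul]) [π]
  simp only [List.flatten_singleton, List.length_singleton, List.map_singleton,
    List.sum_singleton, List.mem_singleton, exists_eq_left] at hinf heval hweight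
  obtain ⟨w, hw, hwℓ⟩ := hℓ _ (QuotientGroup.eq.mp heval)
  have hπ : π.length ≤ (L.map List.length).sum + ℓ := by
    have := hgeo (L.flatten ++ w) (by rw [hρm, hw, mul_inv_cancel_left])
    simp only [List.length_append, List.length_flatten] at this
    omega
  have hcount : L.length ≤ ℓ + 1 := by omega
  obtain ⟨mid, ⟨hmid, hmidfree⟩, hmax⟩ := List.exists_sum_map_length_le_length_mul
    (P := fun p ↦ p <:+: π ∧ IsLoopFree σ p) ⟨List.nil_infix, by simp [IsLoopFree]⟩ L
    fun p hp ↦ ⟨hinf p hp, hfree p hp⟩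
  obtain ⟨pre, suf, rfl⟩ := hmid
  refine ⟨pre, mid, suf, rfl, ?_, fun a b v hmv hv hvF ↦
    hmidfree a b v hmv hv ((QuotientGroup.eq_one_iff _).mpr hvF)⟩
  have hlong : ((pre ++ mid ++ suf).length : ℝ) ≤ (ℓ + 1) * mid.length + ℓ := by
    exact_mod_cast hπ.trans (by gcongr; exact hmax.trans (Nat.mul_le_mul_right _ hcount))
  rw [div_le_iff₀ (by positivity)]
  linarith

/-- if F ⊴ Γ is a finite normal subgroup all of whose elements have word
length ≤ ℓ, then every geodesic word π contains a contiguous subword π' of length at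
least (|π| − ℓ)/(ℓ+1) none of whose nonempty contiguous subwords evaluates into F. -/
theorem stmt18 {Γ A : Type*} [Group Γ] (ρ : List A → Γ)
    (hρ1 : ρ [] = 1) (hρm : ∀ u v : List A, ρ (u ++ v) = ρ u * ρ v)
    (F : Subgroup Γ) [F.Normal] (hF : (F : Set Γ).Finite)
    (ℓ : ℕ) (hℓ : ∀ f ∈ F, ∃ wrd : List A, ρ wrd = f ∧ wrd.length ≤ ℓ)
    (π : List A) (hgeo : ∀ wrd : List A, ρ wrd = ρ π → π.length ≤ wrd.length) :
    ∃ pre mid suf : List A, π = pre ++ mid ++ suf ∧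
      ((π.length : ℝ) - (ℓ : ℝ)) / ((ℓ : ℝ) + 1) ≤ (mid.length : ℝ) ∧
      ∀ (a b v : List A), mid = a ++ v ++ b → v ≠ [] → ρ v ∉ F :=
  stmt18_general ρ hρm F ℓ hℓ π hgeo
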